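/- arXiv:2306.14288 — 4 statements merged into one kernel-verified Lean document; each statement's English description precedes it below -/
import Mathlib

section
/- Let ζ_1,…,ζ_n be i.i.d. N(0, 1), let σ > 0 and λ > 0, and let p₀ = erfc(1/√2) = P(ζ₁² ≥ 1). Then P(Σ_{i=1}^n σ²ζ_i²/(λ + σ²ζ_i²) ≥ n σ² p₀/(2(σ² + λ))) ≥ 1 − e^{−n p₀/8}. -/
/-!
The indicators `1{ζᵢ² ≥ 1}` are independent Bernoulli(p₀) variables, and each summand
`σ²ζᵢ²/(λ + σ²ζᵢ²)` is at least `σ²/(σ² + λ)` times its indicator, because `u ↦ u/(λ + u)` is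
increasing. So it suffices that at least `np₀/2` of the indicators are `1`, which is the
multiplicative Chernoff bound with `δ = 1/2`: with `t = -log 2` the bound reads
`2^{np₀/2} (1 - p₀/2)ⁿ ≤ e^{np₀(log 2 - 1)/2} ≤ e^{-np₀/8}`.
-/

open MeasureTheory ProbabilityTheory Real Matrix
open scoped ENNReal NNReal BigOperators RealInnerProductSpace

noncomputable section

/-- `p₀ = erfc(1/√2)`, the probability that a standard Gaussian has absolute value
at least `1`. -/
def gaussTailOne : ℝ := ((gaussianReal 0 1) {x : ℝ | 1 ≤ x ^ 2}).toReal

lemma exp_mul_le_one_add_mul (t : ℝ) {y : ℝ} (hy₀ : 0 ≤ y) (hy₁ : y ≤ 1) :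
    exp (t * y) ≤ 1 + (exp t - 1) * y := by
  have h := convexOn_exp.2 (Set.mem_univ 0) (Set.mem_univ t) (sub_nonneg.2 hy₁) hy₀
    (sub_add_cancel 1 y)
  simp only [smul_eq_mul, mul_zero, zero_add, exp_zero, mul_one] at h
  rw [mul_comm t y]
  linarith

section Chernoff

variable {Ω : Type*} [MeasurableSpace Ω] {μ : Measure Ω} [IsProbabilityMeasure μ]

lemma mgf_le_one_add_mul_integral {Y : Ω → ℝ} (hY : AEMeasurable Y μ)
    (hY₀ : ∀ ω, 0 ≤ Y ω) (hY₁ : ∀ ω, Y ω ≤ 1) (t : ℝ) :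
    mgf Y μ t ≤ 1 + (exp t - 1) * μ[Y] := by
  have hYint : Integrable Y μ :=
    Integrable.of_bound hY.aestronglyMeasurable 1 (ae_of_all _ fun ω => by
      rw [Real.norm_eq_abs, abs_of_nonneg (hY₀ ω)]
      exact hY₁ ω)
  calc mgf Y μ t = ∫ ω, exp (t * Y ω) ∂μ := rfl
    _ ≤ ∫ ω, 1 + (exp t - 1) * Y ω ∂μ :=
      integral_mono_of_nonneg (ae_of_all _ fun ω => (exp_pos _).le)
        ((integrable_const 1).add (hYint.const_mul _))
        (ae_of_all _ fun ω => exp_mul_le_one_add_mul t (hY₀ ω) (hY₁ ω))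
    _ = 1 + (exp t - 1) * μ[Y] := by
      rw [integral_add (integrable_const 1) (hYint.const_mul _), integral_const_mul]
      simp

lemma mgf_neg_log_two_le {Y : Ω → ℝ} (hY : AEMeasurable Y μ)
    (hY₀ : ∀ ω, 0 ≤ Y ω) (hY₁ : ∀ ω, Y ω ≤ 1) :
    mgf Y μ (-log 2) ≤ exp (-μ[Y] / 2) :=
  calc mgf Y μ (-log 2) ≤ 1 + (exp (-log 2) - 1) * μ[Y] :=
        mgf_le_one_add_mul_integral hY hY₀ hY₁ _
    _ = -μ[Y] / 2 + 1 := by rw [exp_neg, exp_log two_pos]; ring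
    _ ≤ exp (-μ[Y] / 2) := add_one_le_exp _

variable {ι : Type*} [Fintype ι] {Y : ι → Ω → ℝ}

lemma measureReal_sum_le_half_integral_le_exp (hindep : iIndepFun Y μ)
    (hY : ∀ i, AEMeasurable (Y i) μ) (hY₀ : ∀ i ω, 0 ≤ Y i ω) (hY₁ : ∀ i ω, Y i ω ≤ 1) :
    μ.real {ω | ∑ i, Y i ω ≤ (∑ i, μ[Y i]) / 2} ≤ exp (-(∑ i, μ[Y i]) / 8) := by
  set m := ∑ i, μ[Y i]
  have hm : 0 ≤ m := Finset.sum_nonneg fun i _ => integral_nonneg (hY₀ i)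
  have ht : -log 2 ≤ 0 := neg_nonpos.2 (log_nonneg one_le_two)
  have hS : ∀ ω, (∑ i, Y i) ω = ∑ i, Y i ω := fun ω => Finset.sum_apply ω _ _
  have hmgf : mgf (∑ i, Y i) μ (-log 2) ≤ exp (-m / 2) := by
    rw [hindep.mgf_sum₀ hY, show -m / 2 = ∑ i, -μ[Y i] / 2 by
      rw [← Finset.sum_neg_distrib, Finset.sum_div], exp_sum]
    exact Finset.prod_le_prod (fun i _ => mgf_nonneg)
      fun i _ => mgf_neg_log_two_le (hY i) (hY₀ i) (hY₁ i)
  have hint : Integrable (fun ω => exp (-log 2 * (∑ i, Y i) ω)) μ := by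
    refine Integrable.of_bound
      ((Finset.aemeasurable_sum _ fun i _ => hY i).const_mul _).exp.aestronglyMeasurable 1
      (ae_of_all _ fun ω => ?_)
    rw [Real.norm_eq_abs, abs_of_pos (exp_pos _), exp_le_one_iff, hS]
    exact mul_nonpos_of_nonpos_of_nonneg ht (Finset.sum_nonneg fun i _ => hY₀ i ω)
  have hchernoff := measure_le_le_exp_mul_mgf (m / 2) ht hint
  simp only [hS] at hchernoff
  calc _ ≤ exp (-(-log 2) * (m / 2)) * mgf (∑ i, Y i) μ (-log 2) := hchernoff
    _ ≤ exp (log 2 * (m / 2)) * exp (-m / 2) := by rw [neg_neg]; gcongr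
    _ = exp (m * (log 2 - 1) / 2) := by rw [← exp_add]; ring_nf
    _ ≤ exp (-m / 8) := exp_le_exp.2 (by nlinarith [log_two_lt_d9])

lemma ofReal_one_sub_exp_le_measure_half_integral_le_sum (hindep : iIndepFun Y μ)
    (hY : ∀ i, AEMeasurable (Y i) μ) (hY₀ : ∀ i ω, 0 ≤ Y i ω) (hY₁ : ∀ i ω, Y i ω ≤ 1) :
    ENNReal.ofReal (1 - exp (-(∑ i, μ[Y i]) / 8)) ≤
      μ {ω | (∑ i, μ[Y i]) / 2 ≤ ∑ i, Y i ω} := by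
  have hs : NullMeasurableSet {ω | ∑ i, Y i ω ≤ (∑ i, μ[Y i]) / 2} μ :=
    nullMeasurableSet_le (Finset.aemeasurable_fun_sum _ fun i _ => hY i) aemeasurable_const
  calc ENNReal.ofReal (1 - exp (-(∑ i, μ[Y i]) / 8))
      ≤ ENNReal.ofReal (μ.real {ω | ∑ i, Y i ω ≤ (∑ i, μ[Y i]) / 2}ᶜ) := by
        rw [probReal_compl_eq_one_sub₀ hs]
        exact ENNReal.ofReal_le_ofReal
          (by linarith [measureReal_sum_le_half_integral_le_exp hindep hY hY₀ hY₁])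
    _ = μ {ω | ∑ i, Y i ω ≤ (∑ i, μ[Y i]) / 2}ᶜ := ofReal_measureReal
    _ ≤ _ := by
      rw [Set.compl_ofPred]
      exact measure_mono fun ω hω => (not_le.mp hω).le

end Chernoff

lemma integral_indicator_comp_eq_gaussTailOne {Ω : Type*} [MeasurableSpace Ω] {μ : Measure Ω}
    {X : Ω → ℝ} (hX : AEMeasurable X μ) (hdist : μ.map X = gaussianReal 0 1) :
    μ[{x : ℝ | 1 ≤ x ^ 2}.indicator 1 ∘ X] = gaussTailOne := by
  have hA : MeasurableSet {x : ℝ | 1 ≤ x ^ 2} :=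
    measurableSet_le measurable_const (measurable_id.pow_const 2)
  calc μ[{x : ℝ | 1 ≤ x ^ 2}.indicator 1 ∘ X]
      = ∫ x, {x : ℝ | 1 ≤ x ^ 2}.indicator 1 x ∂(μ.map X) :=
        (integral_map hX (measurable_one.indicator hA).aestronglyMeasurable).symm
    _ = gaussTailOne := by rw [hdist, integral_indicator_one hA]; rfl

lemma mul_indicator_le_div_add (σ : ℝ) {lam : ℝ} (hlam : 0 < lam) (x : ℝ) :
    σ ^ 2 / (σ ^ 2 + lam) * {x : ℝ | 1 ≤ x ^ 2}.indicator 1 x ≤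
      σ ^ 2 * x ^ 2 / (lam + σ ^ 2 * x ^ 2) := by
  by_cases hx : x ∈ {x : ℝ | 1 ≤ x ^ 2}
  · rw [Set.indicator_of_mem hx, Pi.one_apply, mul_one,
      div_le_div_iff₀ (by positivity) (by positivity)]
    nlinarith [mul_nonneg (mul_nonneg (sq_nonneg σ) hlam.le) (sub_nonneg.mpr (hx : 1 ≤ x ^ 2))]
  · rw [Set.indicator_of_notMem hx, mul_zero]
    positivity

theorem chisq_rational_tail_I_general
    {Ω : Type} [MeasurableSpace Ω] (μ : Measure Ω) [IsProbabilityMeasure μ]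
    (n : ℕ) (ζ : Fin n → Ω → ℝ)
    (hDist : ∀ i, Measure.map (ζ i) μ = gaussianReal 0 1)
    (hIndep : iIndepFun ζ μ)
    (σ lam : ℝ) (hlam : 0 < lam) :
    ENNReal.ofReal (1 - Real.exp (-((n : ℝ) * gaussTailOne) / 8)) ≤
      μ {ω | (n : ℝ) * σ ^ 2 * gaussTailOne / (2 * (σ ^ 2 + lam)) ≤
        ∑ i, σ ^ 2 * ζ i ω ^ 2 / (lam + σ ^ 2 * ζ i ω ^ 2)} := by
  have hA : Measurable ({x : ℝ | 1 ≤ x ^ 2}.indicator (1 : ℝ → ℝ)) :=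
    measurable_one.indicator (measurableSet_le measurable_const (measurable_id.pow_const 2))
  have hζ : ∀ i, AEMeasurable (ζ i) μ := fun i =>
    .of_map_ne_zero (hDist i ▸ IsProbabilityMeasure.ne_zero _)
  have hcount := ofReal_one_sub_exp_le_measure_half_integral_le_sum (hIndep.comp _ fun _ => hA)
    (fun i => hA.comp_aemeasurable (hζ i))
    (fun i ω => Set.indicator_apply_nonneg fun _ => zero_le_one)
    (fun i ω => Set.indicator_apply_le' (fun _ => le_rfl) fun _ => zero_le_one)
  have hmean i := integral_indicator_comp_eq_gaussTailOne (hζ i) (hDist i)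
  simp only [hmean, Finset.sum_const, Finset.card_univ, Fintype.card_fin, nsmul_eq_mul] at hcount
  refine hcount.trans (measure_mono fun ω hω => ?_)
  calc (n : ℝ) * σ ^ 2 * gaussTailOne / (2 * (σ ^ 2 + lam))
      = σ ^ 2 / (σ ^ 2 + lam) * (n * gaussTailOne / 2) := by rw [div_mul_div_comm]; ring
    _ ≤ σ ^ 2 / (σ ^ 2 + lam) * ∑ i, {x : ℝ | 1 ≤ x ^ 2}.indicator 1 (ζ i ω) := by gcongr; exact hω
    _ ≤ _ := by
      rw [Finset.mul_sum]
      exact Finset.sum_le_sum fun i _ => mul_indicator_le_div_add σ hlam _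

/-- **Lemma (Tail bound for rational functions of χ² random variables, I).**
For `ζ₁, …, ζₙ` i.i.d. `N(0,1)`, `σ > 0` and `λ > 0`,
`P(Σᵢ σ²ζᵢ²/(λ + σ²ζᵢ²) ≥ nσ²p₀/(2(σ² + λ))) ≥ 1 - e^{-np₀/8}` with `p₀ = erfc(1/√2)`. -/
theorem chisq_rational_tail_I
    {Ω : Type} [MeasurableSpace Ω] (μ : Measure Ω) [IsProbabilityMeasure μ]
    (n : ℕ) (ζ : Fin n → Ω → ℝ)
    (hMeas : ∀ i, Measurable (ζ i))
    (hDist : ∀ i, Measure.map (ζ i) μ = gaussianReal 0 1)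
    (hIndep : iIndepFun ζ μ)
    (σ lam : ℝ) (hσ : 0 < σ) (hlam : 0 < lam) :
    ENNReal.ofReal (1 - Real.exp (-((n : ℝ) * gaussTailOne) / 8)) ≤
      μ {ω | (n : ℝ) * σ ^ 2 * gaussTailOne / (2 * (σ ^ 2 + lam)) ≤
        ∑ i, σ ^ 2 * ζ i ω ^ 2 / (lam + σ ^ 2 * ζ i ω ^ 2)} :=
  chisq_rational_tail_I_general μ n ζ hDist hIndep σ lam hlam

end
end

section
/- Let γ_1,…,γ_n, ζ_1,…,ζ_n be 2n i.i.d. N(0, 1) random variables, let σ > 0, and let 0 < λ ≤ σ². Then with p₀ = erfc(1/√2), P(Σ_{i=1}^n ζ_i²/(λ + σ²γ_i²) ≥ n p₀/(16 σ √λ)) ≥ 1 − exp(−n p₀ √λ/(32 σ)). -/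
/-!
Put `t = √λ / σ ≤ 1`. On the event `Aᵢ = {|γᵢ| ≤ t, ζᵢ² ≥ 1}` the `i`-th summand is at least
`1 / (2λ)`. The events `Aᵢ` are independent, and since the standard Gaussian density is at least
`1/8` on `[-1, 1]`, each has probability at least `p = t p₀ / 4`. A lower-tail Chernoff bound
shows that, outside an event of probability `exp (-n p / 8)`, more than `n p / 2` of them occur,
and then the sum is at least `n p / (4λ) = n p₀ / (16 σ √λ)`.
-/

open MeasureTheory ProbabilityTheory Real Matrix
open scoped ENNReal NNReal BigOperators RealInnerProductSpace

noncomputable section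

open Set

lemma one_div_eight_le_gaussianPDFReal {x : ℝ} (hx : x ^ 2 ≤ 1) :
    1 / 8 ≤ gaussianPDFReal 0 1 x := by
  have hroot : √(2 * π * (1 : ℝ≥0)) ≤ 4 := by
    rw [show (4 : ℝ) = √16 by rw [show (16 : ℝ) = 4 ^ 2 by norm_num, sqrt_sq (by norm_num)]]
    gcongr
    push_cast
    linarith [pi_lt_four]
  have hexp : 1 / 2 ≤ exp (-(x - 0) ^ 2 / (2 * (1 : ℝ≥0))) := by
    have := add_one_le_exp (-(x - 0) ^ 2 / (2 * (1 : ℝ≥0)))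
    push_cast at this ⊢
    nlinarith
  calc (1 : ℝ) / 8 = 4⁻¹ * (1 / 2) := by norm_num
    _ ≤ (√(2 * π * (1 : ℝ≥0)))⁻¹ * exp (-(x - 0) ^ 2 / (2 * (1 : ℝ≥0))) := by gcongr
    _ = gaussianPDFReal 0 1 x := rfl

lemma div_four_le_gaussianReal_real_Icc {t : ℝ} (ht0 : 0 ≤ t) (ht1 : t ≤ 1) :
    t / 4 ≤ (gaussianReal 0 1).real (Icc (-t) t) := by
  have hpdf : ∀ x ∈ Icc (-t) t, 1 / 8 ≤ gaussianPDFReal 0 1 x := fun x hx =>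
    one_div_eight_le_gaussianPDFReal (by nlinarith [hx.1, hx.2])
  have hint := setIntegral_ge_of_const_le measurableSet_Icc (by simp) hpdf
    (integrable_gaussianPDFReal 0 1).integrableOn
  rw [measureReal_def, gaussianReal_apply_eq_integral 0 one_ne_zero,
    ENNReal.toReal_ofReal (integral_nonneg fun x => gaussianPDFReal_nonneg 0 1 x)]
  rw [Real.volume_real_Icc_of_le (by linarith), smul_eq_mul] at hint
  linarith

lemma MeasureTheory.ofReal_one_sub_le_measure_of_compl_subset {Ω : Type*} [MeasurableSpace Ω]
    {μ : Measure Ω} [IsProbabilityMeasure μ] {B C : Set Ω} (hB : MeasurableSet B)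
    (hBC : Bᶜ ⊆ C) {ε : ℝ} (hε : μ.real B ≤ ε) : ENNReal.ofReal (1 - ε) ≤ μ C :=
  calc ENNReal.ofReal (1 - ε) ≤ ENNReal.ofReal (μ.real Bᶜ) := by
        gcongr
        rw [probReal_compl_eq_one_sub hB]
        linarith
    _ = μ Bᶜ := ofReal_measureReal
    _ ≤ μ C := measure_mono hBC

namespace ProbabilityTheory

variable {Ω ι : Type*} [MeasurableSpace Ω] {μ : Measure Ω}

section SumElim

variable {β : Type*} [MeasurableSpace β] {X Y : ι → Ω → β} {s t : ι → Set β}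

lemma iIndepFun.measure_biInter_inter_preimage_sumElim (h : iIndepFun (Sum.elim X Y) μ)
    (hs : ∀ i, MeasurableSet (s i)) (ht : ∀ i, MeasurableSet (t i)) (S : Finset ι) :
    μ (⋂ i ∈ S, (X i ⁻¹' s i ∩ Y i ⁻¹' t i)) = ∏ i ∈ S, μ (X i ⁻¹' s i) * μ (Y i ⁻¹' t i) := by
  have key := h.measure_inter_preimage_eq_mul (S.disjSum S) (sets := Sum.elim s t)
    (by rintro (i | i) _ <;> simp [hs, ht])
  rw [Finset.prod_disjSum, ← Finset.prod_mul_distrib] at key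
  simp only [Sum.elim_inl, Sum.elim_inr] at key
  rw [← key]
  congr 1
  ext ω
  simp [Finset.mem_disjSum, forall_and]

lemma iIndepFun.iIndepSet_inter_preimage_sumElim (h : iIndepFun (Sum.elim X Y) μ)
    (hX : ∀ i, Measurable (X i)) (hY : ∀ i, Measurable (Y i))
    (hs : ∀ i, MeasurableSet (s i)) (ht : ∀ i, MeasurableSet (t i)) :
    iIndepSet (fun i => X i ⁻¹' s i ∩ Y i ⁻¹' t i) μ := by
  rw [iIndepSet_iff_meas_biInter fun i => (hX i (hs i)).inter (hY i (ht i))]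
  intro S
  rw [h.measure_biInter_inter_preimage_sumElim hs ht]
  refine Finset.prod_congr rfl fun i _ => ?_
  exact ((h.indepFun Sum.inl_ne_inr).measure_inter_preimage_eq_mul _ _ (hs i) (ht i)).symm

end SumElim

lemma IndepFun.le_measureReal_preimage_Icc_inter_tail {X Y : Ω → ℝ} (hXY : IndepFun X Y μ)
    (hX : Measurable X) (hY : Measurable Y) (hXlaw : μ.map X = gaussianReal 0 1)
    (hYlaw : μ.map Y = gaussianReal 0 1) {t : ℝ} (ht0 : 0 ≤ t) (ht1 : t ≤ 1) :
    t / 4 * gaussTailOne ≤ μ.real (X ⁻¹' Icc (-t) t ∩ Y ⁻¹' {y | 1 ≤ y ^ 2}) := by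
  have htail : MeasurableSet {y : ℝ | 1 ≤ y ^ 2} := measurableSet_le measurable_const (by fun_prop)
  rw [measureReal_def, hXY.measure_inter_preimage_eq_mul _ _ measurableSet_Icc htail,
    ← Measure.map_apply hX measurableSet_Icc, ← Measure.map_apply hY htail, hXlaw, hYlaw,
    ENNReal.toReal_mul]
  exact mul_le_mul_of_nonneg_right (div_four_le_gaussianReal_real_Icc ht0 ht1) ENNReal.toReal_nonneg

variable [IsProbabilityMeasure μ]

lemma mgf_indicator_one {A : Set Ω} (hA : MeasurableSet A) (t : ℝ) :
    mgf (A.indicator 1) μ t = 1 + μ.real A * (exp t - 1) := by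
  have hexp : (fun ω => exp (t * A.indicator 1 ω)) =
      fun ω => A.indicator (fun _ => exp t - 1) ω + 1 := by
    ext ω
    by_cases hω : ω ∈ A <;> simp [hω]
  rw [mgf, hexp, integral_add ((integrable_const _).indicator hA) (integrable_const 1),
    integral_indicator_const _ hA]
  simp [add_comm, mul_comm]

lemma measureReal_sum_indicator_le_half_le [Fintype ι] {A : ι → Set Ω}
    (hA : ∀ i, MeasurableSet (A i)) (hindep : iIndepSet A μ) {p : ℝ} (hp0 : 0 ≤ p)
    (hp : ∀ i, p ≤ μ.real (A i)) :
    μ.real {ω | ∑ i, (A i).indicator 1 ω ≤ Fintype.card ι * p / 2} ≤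
      exp (-(Fintype.card ι * p / 8)) := by
  set Z : Ω → ℝ := ∑ i, (A i).indicator 1
  set n : ℝ := (Fintype.card ι : ℝ) with hn
  have hmeas : ∀ i, Measurable ((A i).indicator (1 : Ω → ℝ)) :=
    fun i => measurable_const.indicator (hA i)
  have hZ0 : ∀ ω, 0 ≤ Z ω := fun ω => by
    simp only [Z, Finset.sum_apply]
    exact Finset.sum_nonneg fun i _ => indicator_nonneg (fun _ _ => zero_le_one) ω
  have hint : Integrable (fun ω => exp (-log 2 * Z ω)) μ := by
    refine Integrable.of_bound (by fun_prop) 1 (ae_of_all _ fun ω => ?_)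
    rw [norm_of_nonneg (exp_pos _).le, exp_le_one_iff]
    nlinarith [hZ0 ω, log_pos one_lt_two]
  have hmgf : mgf Z μ (-log 2) ≤ exp (-(n * p / 2)) := by
    have hindicator : iIndepFun (fun i => (A i).indicator (1 : Ω → ℝ)) μ :=
      hindep.iIndepFun_indicator
    have hfactor : ∀ i, mgf ((A i).indicator 1) μ (-log 2) ≤ exp (-(p / 2)) := fun i => by
      rw [mgf_indicator_one (hA i), exp_neg, exp_log two_pos]
      linarith [add_one_le_exp (-(p / 2)), hp i]
    calc mgf Z μ (-log 2) = ∏ i, mgf ((A i).indicator 1) μ (-log 2) :=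
          hindicator.mgf_sum hmeas _
      _ ≤ ∏ _i : ι, exp (-(p / 2)) :=
          Finset.prod_le_prod (fun i _ => mgf_nonneg) fun i _ => hfactor i
      _ = exp (-(n * p / 2)) := by
          rw [Finset.prod_const, Finset.card_univ, ← exp_nat_mul, hn]
          ring_nf
  have hZ : ∀ ω, ∑ i, (A i).indicator 1 ω = Z ω := fun ω => (Finset.sum_apply ω _ _).symm
  simp_rw [hZ]
  -- Chernoff at parameter `log 2`, where each indicator has mgf `1 - μ(Aᵢ) / 2`.
  calc μ.real {ω | Z ω ≤ n * p / 2}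
      ≤ exp (- -log 2 * (n * p / 2)) * mgf Z μ (-log 2) :=
        measure_le_le_exp_mul_mgf _ (by simp [log_nonneg one_le_two]) hint
    _ ≤ exp (log 2 * (n * p / 2)) * exp (-(n * p / 2)) := by
        rw [neg_neg]; gcongr
    _ ≤ exp (-(n * p / 8)) := by
        rw [← exp_add]
        gcongr
        nlinarith [log_two_lt_d9, mul_nonneg (Nat.cast_nonneg (α := ℝ) (Fintype.card ι)) hp0]

lemma ofReal_one_sub_exp_le_measure_le_sum [Fintype ι] {A : ι → Set Ω}
    (hA : ∀ i, MeasurableSet (A i)) (hindep : iIndepSet A μ) {p c : ℝ} (hp0 : 0 ≤ p)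
    (hp : ∀ i, p ≤ μ.real (A i)) (hc : 0 ≤ c) {f : ι → Ω → ℝ} (hf0 : ∀ i ω, 0 ≤ f i ω)
    (hfA : ∀ i, ∀ ω ∈ A i, c ≤ f i ω) :
    ENNReal.ofReal (1 - exp (-(Fintype.card ι * p / 8))) ≤
      μ {ω | Fintype.card ι * p / 2 * c ≤ ∑ i, f i ω} := by
  refine ofReal_one_sub_le_measure_of_compl_subset
    (measurableSet_le (Finset.measurable_sum _ fun i _ => measurable_const.indicator (hA i))
      measurable_const)
    (fun ω (hω : ¬ _) => ?_) (measureReal_sum_indicator_le_half_le hA hindep hp0 hp)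
  have hterm : ∀ i, (A i).indicator 1 ω * c ≤ f i ω := fun i => by
    by_cases hωi : ω ∈ A i
    · simpa [hωi] using hfA i ω hωi
    · simpa [hωi] using hf0 i ω
  calc Fintype.card ι * p / 2 * c ≤ (∑ i, (A i).indicator 1 ω) * c := by
        gcongr; exact (not_le.1 hω).le
    _ ≤ ∑ i, f i ω := by
        rw [Finset.sum_mul]
        exact Finset.sum_le_sum fun i _ => hterm i

end ProbabilityTheory

lemma one_div_two_mul_le_div_add {lam a b : ℝ} (hlam : 0 < lam) (ha0 : 0 ≤ a) (ha : a ≤ lam)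
    (hb : 1 ≤ b) : 1 / (2 * lam) ≤ b / (lam + a) :=
  calc 1 / (2 * lam) ≤ 1 / (lam + a) := by gcongr; linarith
    _ ≤ b / (lam + a) := by gcongr

/-- **Lemma (Tail bound for rational functions of χ² random variables, II).**
For `γ₁, …, γₙ, ζ₁, …, ζₙ` i.i.d. `N(0,1)` (2n independent standard Gaussians),
`σ > 0` and `0 < λ ≤ σ²`,
`P(Σᵢ ζᵢ²/(λ + σ²γᵢ²) ≥ np₀/(16σ√λ)) ≥ 1 - exp(-np₀√λ/(32σ))` with `p₀ = erfc(1/√2)`. -/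
theorem chisq_rational_tail_II
    {Ω : Type} [MeasurableSpace Ω] (μ : Measure Ω) [IsProbabilityMeasure μ]
    (n : ℕ) (γ ζ : Fin n → Ω → ℝ)
    (hMeas : ∀ i, Measurable (Sum.elim γ ζ i))
    (hDist : ∀ i, Measure.map (Sum.elim γ ζ i) μ = gaussianReal 0 1)
    (hIndep : iIndepFun (Sum.elim γ ζ) μ)
    (σ lam : ℝ) (hσ : 0 < σ) (hlam0 : 0 < lam) (hlam : lam ≤ σ ^ 2) :
    ENNReal.ofReal (1 - Real.exp (-((n : ℝ) * gaussTailOne * Real.sqrt lam) / (32 * σ))) ≤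
      μ {ω | (n : ℝ) * gaussTailOne / (16 * σ * Real.sqrt lam) ≤
        ∑ i, ζ i ω ^ 2 / (lam + σ ^ 2 * γ i ω ^ 2)} := by
  set t := √lam / σ with ht
  have ht1 : t ≤ 1 := (div_le_one hσ).2 (by simpa [sqrt_sq hσ.le] using sqrt_le_sqrt hlam)
  have hσt : σ ^ 2 * t ^ 2 = lam := by
    rw [ht, div_pow, sq_sqrt hlam0.le]
    field_simp
  have hsmall : ∀ x ∈ Icc (-t) t, σ ^ 2 * x ^ 2 ≤ lam := fun x hx =>
    hσt ▸ mul_le_mul_of_nonneg_left (sq_le_sq' hx.1 hx.2) (sq_nonneg σ)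
  have hγ : ∀ i, Measurable (γ i) := fun i => hMeas (.inl i)
  have hζ : ∀ i, Measurable (ζ i) := fun i => hMeas (.inr i)
  have htail : MeasurableSet {y : ℝ | 1 ≤ y ^ 2} := measurableSet_le measurable_const (by fun_prop)
  have hbound := ofReal_one_sub_exp_le_measure_le_sum (p := t / 4 * gaussTailOne)
    (c := 1 / (2 * lam)) (f := fun i ω => ζ i ω ^ 2 / (lam + σ ^ 2 * γ i ω ^ 2))
    (fun i => (hγ i measurableSet_Icc).inter (hζ i htail))
    (hIndep.iIndepSet_inter_preimage_sumElim hγ hζ (fun _ => measurableSet_Icc) fun _ => htail)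
    (mul_nonneg (by positivity) ENNReal.toReal_nonneg)
    (fun i => (hIndep.indepFun Sum.inl_ne_inr).le_measureReal_preimage_Icc_inter_tail (hγ i)
      (hζ i) (hDist (.inl i)) (hDist (.inr i)) (by positivity) ht1)
    (by positivity) (fun i ω => by positivity)
    fun i ω hω => one_div_two_mul_le_div_add hlam0 (by positivity) (hsmall _ hω.1) hω.2
  convert hbound using 5
  · rw [Fintype.card_fin, ht]
    field_simp
    ring
  · rw [Fintype.card_fin, ht]
    field_simp
    rw [sq_sqrt hlam0.le]
    ring

end
end

section
/- Let γ_1,…,γ_n, ζ_1,…,ζ_n be 2n i.i.d. N(0, 1) random variables, and let σ > 0, λ > 0, A ≥ 0. Then P(Σ_{i=1}^n σ γ_i ζ_i/(λ + σ²γ_i²) ≥ −n√(2A)/λ^{1/4}) ≥ 1 − e^{−A n √λ}. -/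
/-!
Conditionally on `γ`, the sum `∑ᵢ cᵢ ζᵢ` with `cᵢ = σγᵢ/(λ + σ²γᵢ²)` is a weighted sum of
independent standard Gaussians, hence sub-Gaussian with variance proxy `∑ᵢ cᵢ²`. By AM-GM,
`λ + σ²γᵢ² ≥ 2√λ |σγᵢ|`, so `cᵢ² ≤ 1/(4λ)` whatever `γ` is. The Chernoff bound for a
sub-Gaussian variable with proxy `n/(4λ)` then bounds the lower tail at `t = n√(2A)/λ^{1/4}` by
`exp(-2λt²/n) = exp(-4An√λ)` for every value of `γ`, and integrating over `γ` (Fubini on the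
joint law, which is a product of standard Gaussians by independence) gives the claim.
-/

open MeasureTheory ProbabilityTheory Real
open scoped ENNReal NNReal

namespace ProbabilityTheory

lemma HasSubgaussianMGF.mono {Ω : Type*} [MeasurableSpace Ω] {μ : Measure Ω} {X : Ω → ℝ}
    {c c' : ℝ≥0} (h : HasSubgaussianMGF X c μ) (hc : c ≤ c') : HasSubgaussianMGF X c' μ where
  integrable_exp_mul := h.integrable_exp_mul
  mgf_le t := (h.mgf_le t).trans (exp_le_exp.2 (by gcongr))

lemma hasSubgaussianMGF_gaussianReal (v : ℝ≥0) :
    HasSubgaussianMGF (fun x ↦ x) v (gaussianReal 0 v) where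
  integrable_exp_mul := integrable_exp_mul_gaussianReal
  mgf_le t := by simp [mgf_fun_id_gaussianReal]

lemma hasSubgaussianMGF_sum_mul_pi_gaussianReal {ι : Type*} [Fintype ι] (w : ι → ℝ) {c : ℝ≥0}
    (hw : ∀ i, w i ^ 2 ≤ c) :
    HasSubgaussianMGF (fun x : ι → ℝ ↦ ∑ i, w i * x i) (Fintype.card ι * c)
      (Measure.pi fun _ ↦ gaussianReal 0 1) := by
  have hcoord (i : ι) :
      HasSubgaussianMGF (fun x : ι → ℝ ↦ x i) 1 (Measure.pi fun _ ↦ gaussianReal 0 1) := by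
    refine .of_map (measurable_pi_apply i).aemeasurable (X := fun y ↦ y) ?_
    rw [(measurePreserving_eval _ i).map_eq]
    exact_mod_cast hasSubgaussianMGF_gaussianReal 1
  have hsum := HasSubgaussianMGF.sum_of_iIndepFun (s := Finset.univ)
    (iIndepFun_pi (X := fun i (y : ℝ) ↦ w i * y) fun _ ↦ by fun_prop)
    fun i _ ↦ ((hcoord i).const_mul (w i)).mono ((mul_one (w i ^ 2)).le.trans (hw i))
  simpa using hsum

lemma measure_prod_ge_le_of_forall_hasSubgaussianMGF {α β : Type*} [MeasurableSpace α]
    [MeasurableSpace β] (ν : Measure α) [IsProbabilityMeasure ν] (ρ : Measure β)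
    [IsProbabilityMeasure ρ] {X : α × β → ℝ} (hX : Measurable X) {c : ℝ≥0}
    (h : ∀ a, HasSubgaussianMGF (fun b ↦ X (a, b)) c ρ) {ε : ℝ} (hε : 0 ≤ ε) :
    ν.prod ρ {p | ε ≤ X p} ≤ ENNReal.ofReal (exp (-ε ^ 2 / (2 * c))) := by
  rw [Measure.prod_apply (measurableSet_le measurable_const hX)]
  calc ∫⁻ a, ρ (Prod.mk a ⁻¹' {p | ε ≤ X p}) ∂ν
      ≤ ∫⁻ _, ENNReal.ofReal (exp (-ε ^ 2 / (2 * c))) ∂ν := by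
        refine lintegral_mono fun a ↦ ?_
        rw [← ofReal_measureReal]
        exact ENNReal.ofReal_le_ofReal ((h a).measure_ge_le hε)
    _ = ENNReal.ofReal (exp (-ε ^ 2 / (2 * c))) := by simp

lemma map_prod_eq_pi_prod_pi_of_iIndepFun {Ω ι κ E : Type*} [MeasurableSpace Ω]
    [Fintype ι] [Fintype κ] [MeasurableSpace E] {μ : Measure Ω} {ν : Measure E} [SigmaFinite ν]
    {X : ι → Ω → E} {Y : κ → Ω → E} (hXY : ∀ i, Measurable (Sum.elim X Y i))
    (hlaw : ∀ i, μ.map (Sum.elim X Y i) = ν) (hindep : iIndepFun (Sum.elim X Y) μ) :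
    μ.map (fun ω ↦ (fun i ↦ X i ω, fun j ↦ Y j ω))
      = (Measure.pi fun _ ↦ ν).prod (Measure.pi fun _ ↦ ν) := by
  have hjoint : μ.map (fun ω i ↦ Sum.elim X Y i ω) = Measure.pi fun _ ↦ ν := by
    rw [hindep.map_fun_eq_pi_map fun i ↦ (hXY i).aemeasurable]
    simp_rw [hlaw]
  have hsplit : (fun ω ↦ (fun i ↦ X i ω, fun j ↦ Y j ω))
      = MeasurableEquiv.sumPiEquivProdPi (fun _ ↦ E) ∘ fun ω i ↦ Sum.elim X Y i ω := rfl
  rw [hsplit, ← Measure.map_map (MeasurableEquiv.measurable _) (measurable_pi_lambda _ hXY),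
    hjoint, (measurePreserving_sumPiEquivProdPi fun _ ↦ ν).map_eq]

end ProbabilityTheory

lemma ofReal_one_sub_le_of_measure_compl_le {α : Type*} [MeasurableSpace α] {μ : Measure α}
    [IsProbabilityMeasure μ] {s : Set α} (hs : MeasurableSet s) {δ : ℝ} (hδ : 0 ≤ δ)
    (h : μ sᶜ ≤ ENNReal.ofReal δ) : ENNReal.ofReal (1 - δ) ≤ μ s :=
  calc ENNReal.ofReal (1 - δ) = 1 - ENNReal.ofReal δ := by
        rw [ENNReal.ofReal_sub _ hδ, ENNReal.ofReal_one]
    _ ≤ 1 - μ sᶜ := tsub_le_tsub_left h 1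
    _ = μ s := by
        rw [prob_compl_eq_one_sub hs, ENNReal.sub_sub_cancel ENNReal.one_ne_top prob_le_one]

lemma sq_div_add_sq_le {lam : ℝ} (hlam : 0 < lam) (y : ℝ) :
    (y / (lam + y ^ 2)) ^ 2 ≤ (4 * lam)⁻¹ := by
  rw [div_pow, div_le_iff₀ (by positivity), inv_mul_eq_div, le_div_iff₀ (by positivity)]
  nlinarith [sq_nonneg (lam - y ^ 2)]

lemma hasSubgaussianMGF_neg_sum_rational_mul_pi_gaussianReal {ι : Type*} [Fintype ι]
    (σ : ℝ) {lam : ℝ} (hlam : 0 < lam) (a : ι → ℝ) :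
    HasSubgaussianMGF (fun b : ι → ℝ ↦ -∑ i, σ * a i * b i / (lam + σ ^ 2 * a i ^ 2))
      (Fintype.card ι * Real.toNNReal (4 * lam)⁻¹) (Measure.pi fun _ ↦ gaussianReal 0 1) := by
  refine (hasSubgaussianMGF_sum_mul_pi_gaussianReal (fun i ↦ -(σ * a i / (lam + σ ^ 2 * a i ^ 2)))
    fun i ↦ ?_).congr (ae_of_all _ fun b ↦ ?_)
  · rw [neg_sq, ← mul_pow, Real.coe_toNNReal _ (by positivity)]
    exact sq_div_add_sq_le hlam _
  · simp only [← Finset.sum_neg_distrib]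
    exact Finset.sum_congr rfl fun i _ ↦ by ring

lemma exp_neg_sq_div_le {lam A : ℝ} (hlam : 0 < lam) (hA : 0 ≤ A) (n : ℕ) :
    exp (-((n : ℝ) * √(2 * A) / lam ^ ((1 : ℝ) / 4)) ^ 2 / (2 * (n * (4 * lam)⁻¹)))
      ≤ exp (-(A * n * √lam)) := by
  rcases n.eq_zero_or_pos with rfl | hn
  · simp
  have hr : (lam ^ ((1 : ℝ) / 4)) ^ 2 = √lam := by
    rw [← rpow_natCast, ← rpow_mul hlam.le, sqrt_eq_rpow]
    norm_num
  have hs : 0 < √lam := sqrt_pos.2 hlam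
  have hn' : (0 : ℝ) < n := by exact_mod_cast hn
  rw [exp_le_exp, div_pow, mul_pow, sq_sqrt (by positivity), hr]
  nth_rewrite 2 [← sq_sqrt hlam.le]
  field_simp
  nlinarith [mul_nonneg (mul_nonneg hA hn'.le) hs.le]

theorem gaussian_rational_tail_general
    {Ω : Type} [MeasurableSpace Ω] (μ : Measure Ω) [IsProbabilityMeasure μ]
    (n : ℕ) (γ ζ : Fin n → Ω → ℝ)
    (hMeas : ∀ i, Measurable (Sum.elim γ ζ i))
    (hDist : ∀ i, Measure.map (Sum.elim γ ζ i) μ = gaussianReal 0 1)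
    (hIndep : iIndepFun (Sum.elim γ ζ) μ)
    (σ lam A : ℝ) (hlam : 0 < lam) (hA : 0 ≤ A) :
    ENNReal.ofReal (1 - Real.exp (-(A * (n : ℝ) * Real.sqrt lam))) ≤
      μ {ω | -((n : ℝ) * Real.sqrt (2 * A) / lam ^ ((1 : ℝ) / 4)) ≤
        ∑ i, σ * γ i ω * ζ i ω / (lam + σ ^ 2 * γ i ω ^ 2)} := by
  set P := Measure.pi fun _ : Fin n ↦ gaussianReal 0 1
  set t := (n : ℝ) * √(2 * A) / lam ^ ((1 : ℝ) / 4)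
  set F : (Fin n → ℝ) × (Fin n → ℝ) → ℝ :=
    fun p ↦ ∑ i, σ * p.1 i * p.2 i / (lam + σ ^ 2 * p.1 i ^ 2)
  have hF : Measurable F := by fun_prop
  have hset : MeasurableSet {p | -t ≤ F p} := measurableSet_le measurable_const hF
  have hevent : μ {ω | -t ≤ ∑ i, σ * γ i ω * ζ i ω / (lam + σ ^ 2 * γ i ω ^ 2)}
      = P.prod P {p | -t ≤ F p} := by
    have hpair : Measurable fun ω ↦ (fun i ↦ γ i ω, fun i ↦ ζ i ω) :=
      (measurable_pi_lambda _ fun i ↦ hMeas (.inl i)).prodMk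
        (measurable_pi_lambda _ fun i ↦ hMeas (.inr i))
    rw [← map_prod_eq_pi_prod_pi_of_iIndepFun hMeas hDist hIndep, Measure.map_apply hpair hset]
    rfl
  have htail : P.prod P {p | -t ≤ F p}ᶜ ≤ ENNReal.ofReal (exp (-(A * n * √lam))) :=
    calc P.prod P {p | -t ≤ F p}ᶜ ≤ P.prod P {p | t ≤ -F p} :=
          measure_mono fun p (hp : ¬-t ≤ F p) ↦ le_neg_of_le_neg (not_le.1 hp).le
      _ ≤ _ := measure_prod_ge_le_of_forall_hasSubgaussianMGF P P hF.neg
          (hasSubgaussianMGF_neg_sum_rational_mul_pi_gaussianReal σ hlam) (by positivity)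
      _ ≤ _ := ENNReal.ofReal_le_ofReal <| by
          convert exp_neg_sq_div_le hlam hA n using 4
          rw [Fintype.card_fin, NNReal.coe_mul, NNReal.coe_natCast,
            Real.coe_toNNReal _ (by positivity)]
  rw [hevent]
  exact ofReal_one_sub_le_of_measure_compl_le hset (exp_nonneg _) htail

/-- **Lemma (Tail bound for rational functions of Gaussian random variables).**
For `γ₁, …, γₙ, ζ₁, …, ζₙ` i.i.d. `N(0,1)` (2n independent standard Gaussians),
any `σ > 0`, `λ > 0` and `A ≥ 0`,
`P(Σᵢ σγᵢζᵢ/(λ + σ²γᵢ²) ≥ -n√(2A)/λ^{1/4}) ≥ 1 - e^{-An√λ}`. -/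
theorem gaussian_rational_tail
    {Ω : Type} [MeasurableSpace Ω] (μ : Measure Ω) [IsProbabilityMeasure μ]
    (n : ℕ) (γ ζ : Fin n → Ω → ℝ)
    (hMeas : ∀ i, Measurable (Sum.elim γ ζ i))
    (hDist : ∀ i, Measure.map (Sum.elim γ ζ i) μ = gaussianReal 0 1)
    (hIndep : iIndepFun (Sum.elim γ ζ) μ)
    (σ lam A : ℝ) (hσ : 0 < σ) (hlam : 0 < lam) (hA : 0 ≤ A) :
    ENNReal.ofReal (1 - Real.exp (-(A * (n : ℝ) * Real.sqrt lam))) ≤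
      μ {ω | -((n : ℝ) * Real.sqrt (2 * A) / lam ^ ((1 : ℝ) / 4)) ≤
        ∑ i, σ * γ i ω * ζ i ω / (lam + σ ^ 2 * γ i ω ^ 2)} :=
  gaussian_rational_tail_general μ n γ ζ hMeas hDist hIndep σ lam A hlam hA
end

section
/- Let θ₁, θ₂ be identically distributed real-valued continuous random variables taking values in Θ ⊆ ℝ, let y = g(θ, ε) be an observation from a model parameterized by θ (g measurable, ε a random variable independent of θ) such that Law(y | θ) has a Lebesgue density for every θ ∈ Θ, and let θ̂(y) be any estimator. Then for any coupling Π of (θ₁, θ₂): E_{θ, y}[(θ̂(y) − θ)²] ≥ (1/4)·E_{(θ₁,θ₂)~Π}[(θ₁ − θ₂)²·max(0, 1 − √(2·KL(Law(y | θ₁) ‖ Law(y | θ₂))))]. -/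
open MeasureTheory ProbabilityTheory Real Matrix
open scoped ENNReal NNReal BigOperators RealInnerProductSpace

noncomputable section

open Classical in
/-- The Kullback–Leibler divergence `KL(P ‖ Q)` (as a real number; junk value `0` when
it is not defined/finite), via the log-likelihood ratio. -/
def klDivReal (P Q : Measure ℝ) : ℝ :=
  if P ≪ Q ∧ Integrable (llr P Q) P then ∫ x, llr P Q x ∂P else 0

/-- `KL(P ‖ Q)` is finite (absolutely continuous with integrable log-likelihood ratio). -/
def KLFinite (P Q : Measure ℝ) : Prop := P ≪ Q ∧ Integrable (llr P Q) P

open Classical in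
/-- The factor `max(0, 1 - √(2 KL(P ‖ Q)))`, interpreted as `0` when `KL(P ‖ Q) = ∞`. -/
def klTerm (P Q : Measure ℝ) : ℝ :=
  if KLFinite P Q then max 0 (1 - Real.sqrt (2 * klDivReal P Q)) else 0

/-! For each `ω`, Le Cam's two-point argument bounds `(a - b)² m` by twice the sum of the risks of
the estimator at `a` under `κ a` and at `b` under `κ b`, where `m` is the mass of the overlap
`κ a ∧ κ b`; and `m ≥ 1 - √(2 KL(κ a ‖ κ b))` by a Pinsker-type inequality, which comes from the
pointwise bound `((1 - t)⁺)² ≤ 2 (t log t - t + 1)`. Integrating over the coupling, the two risk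
terms have the same integral because `θ₁` and `θ₂` have the same law; this gives the factor `4`. -/

open InformationTheory

lemma sq_max_zero_one_sub_le_two_mul_klFun {t : ℝ} (ht : 0 ≤ t) :
    max 0 (1 - t) ^ 2 ≤ 2 * klFun t := by
  rw [klFun_apply]
  rcases ht.eq_or_lt with rfl | ht
  · simp
  rcases le_or_gt t 1 with h1 | h1
  · -- `log t ≥ (t - t⁻¹) / 2` on `(0, 1]`, i.e. `sinh s ≥ s` at `s = -log t`
    have hsinh : -log t ≤ sinh (-log t) :=
      self_le_sinh_iff.mpr (neg_nonneg.mpr (log_nonpos ht.le h1))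
    rw [sinh_eq, neg_neg, exp_log ht, exp_neg, exp_log ht] at hsinh
    have hinv : t * t⁻¹ = 1 := mul_inv_cancel₀ ht.ne'
    rw [max_eq_right (by linarith)]
    nlinarith [mul_le_mul_of_nonneg_left hsinh ht.le]
  · have hlog := mul_le_mul_of_nonneg_left (one_sub_inv_le_log_of_pos ht) ht.le
    rw [mul_sub, mul_one, mul_inv_cancel₀ ht.ne'] at hlog
    rw [max_eq_left (by linarith)]
    linarith

variable {α : Type*} [MeasurableSpace α]

def overlap (P Q : Measure α) : Measure α :=
  Q.withDensity fun x => ENNReal.ofReal (min (P.rnDeriv Q x).toReal 1)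

lemma overlap_le_left (P Q : Measure α) : overlap P Q ≤ P :=
  (withDensity_mono (ae_of_all _ fun _ =>
      (ENNReal.ofReal_le_ofReal (min_le_left _ _)).trans ENNReal.ofReal_toReal_le)).trans
    (Measure.withDensity_rnDeriv_le P Q)

lemma overlap_le_right (P Q : Measure α) : overlap P Q ≤ Q := by
  calc overlap P Q ≤ Q.withDensity 1 :=
        withDensity_mono (ae_of_all _ fun _ => ENNReal.ofReal_le_one.mpr (min_le_right _ _))
    _ = Q := withDensity_one

lemma overlap_univ (P Q : Measure α) [IsFiniteMeasure P] :
    overlap P Q Set.univ = ENNReal.ofReal (∫ x, min (P.rnDeriv Q x).toReal 1 ∂Q) := by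
  rw [overlap, withDensity_apply _ MeasurableSet.univ, Measure.restrict_univ,
    ofReal_integral_eq_lintegral_ofReal]
  · refine (Measure.integrable_toReal_rnDeriv (μ := P) (ν := Q)).mono
      ((Measure.measurable_rnDeriv P Q).ennreal_toReal.min measurable_const).aestronglyMeasurable
      (ae_of_all _ fun x => ?_)
    rw [norm_eq_abs, norm_eq_abs]
    exact abs_le_abs_of_nonneg (le_min ENNReal.toReal_nonneg zero_le_one) (min_le_left _ _)
  · exact ae_of_all _ fun _ => le_min ENNReal.toReal_nonneg zero_le_one

lemma memLp_max_zero_one_sub_rnDeriv (P Q : Measure α) [IsFiniteMeasure Q] (p : ℝ≥0∞) :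
    MemLp (fun x => max 0 (1 - (P.rnDeriv Q x).toReal)) p Q := by
  refine MemLp.of_bound (measurable_const.max
    (measurable_const.sub (Measure.measurable_rnDeriv P Q).ennreal_toReal)).aestronglyMeasurable
    1 (ae_of_all _ fun x => ?_)
  rw [norm_eq_abs, abs_of_nonneg (le_max_left _ _)]
  exact max_le zero_le_one (sub_le_self _ ENNReal.toReal_nonneg)

/-- A Pinsker-type inequality: the total variation distance `∫ (1 - dP/dQ)⁺ dQ` is at most
`√(2 KL(P ‖ Q))`. -/
lemma integral_max_zero_one_sub_rnDeriv_le (P Q : Measure α) [IsProbabilityMeasure P]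
    [IsProbabilityMeasure Q] (hPQ : P ≪ Q) (hint : Integrable (llr P Q) P) :
    ∫ x, max 0 (1 - (P.rnDeriv Q x).toReal) ∂Q ≤ √(2 * ∫ x, llr P Q x ∂P) := by
  set u : α → ℝ := fun x => max 0 (1 - (P.rnDeriv Q x).toReal)
  have hu_nonneg : ∀ x, 0 ≤ u x := fun x => le_max_left _ _
  have hu : MemLp u 2 Q := memLp_max_zero_one_sub_rnDeriv P Q 2
  have hjensen : (∫ x, u x ∂Q) ^ 2 ≤ ∫ x, u x ^ 2 ∂Q := by
    simpa [variance_eq_sub hu] using variance_nonneg u Q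
  have hkl : ∫ x, u x ^ 2 ∂Q ≤ 2 * ∫ x, llr P Q x ∂P := by
    have hkl_eq := integral_klFun_rnDeriv hPQ hint
    simp only [probReal_univ, add_sub_cancel_right] at hkl_eq
    rw [← hkl_eq, ← integral_const_mul]
    exact integral_mono hu.integrable_sq
      (((integrable_klFun_rnDeriv_iff hPQ).mpr hint).const_mul 2)
      fun x => sq_max_zero_one_sub_le_two_mul_klFun ENNReal.toReal_nonneg
  exact (le_sqrt (integral_nonneg hu_nonneg) ((sq_nonneg _).trans (hjensen.trans hkl))).mpr
    (hjensen.trans hkl)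

lemma ofReal_klTerm_le_overlap_univ (P Q : Measure ℝ) [IsProbabilityMeasure P]
    [IsProbabilityMeasure Q] : ENNReal.ofReal (klTerm P Q) ≤ overlap P Q Set.univ := by
  by_cases hfin : KLFinite P Q
  · obtain ⟨hPQ, hint⟩ := hfin
    rw [klTerm, if_pos ⟨hPQ, hint⟩, klDivReal, if_pos ⟨hPQ, hint⟩, overlap_univ]
    refine ENNReal.ofReal_le_ofReal
      (max_le (integral_nonneg fun _ => le_min ENNReal.toReal_nonneg zero_le_one) ?_)
    have hmin : ∀ x, min (P.rnDeriv Q x).toReal 1 = 1 - max 0 (1 - (P.rnDeriv Q x).toReal) :=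
      fun x => by rw [← min_sub_sub_left, sub_zero, sub_sub_cancel, min_comm]
    simp_rw [hmin]
    rw [integral_sub (integrable_const 1)
      ((memLp_max_zero_one_sub_rnDeriv P Q 1).integrable le_rfl), integral_const, probReal_univ,
      one_smul]
    linarith [integral_max_zero_one_sub_rnDeriv_le P Q hPQ hint]
  · simp [klTerm, hfin]

/-- Le Cam's two-point argument: on the common part `ν` of `P` and `Q`, the estimate `f y`
cannot be close to both `a` and `b`. -/
lemma two_point_lower_bound {ν P Q : Measure α} (hνP : ν ≤ P) (hνQ : ν ≤ Q) {f : α → ℝ}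
    (hf : Measurable f) (a b : ℝ) :
    ENNReal.ofReal ((a - b) ^ 2) * ν Set.univ ≤
      2 * (∫⁻ y, ENNReal.ofReal ((f y - a) ^ 2) ∂P + ∫⁻ y, ENNReal.ofReal ((f y - b) ^ 2) ∂Q) := by
  have hpoint : ∀ y, ENNReal.ofReal ((a - b) ^ 2) ≤
      2 * (ENNReal.ofReal ((f y - a) ^ 2) + ENNReal.ofReal ((f y - b) ^ 2)) := fun y => by
    rw [← ENNReal.ofReal_add (sq_nonneg _) (sq_nonneg _), ← ENNReal.ofReal_ofNat 2,
      ← ENNReal.ofReal_mul zero_le_two]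
    exact ENNReal.ofReal_le_ofReal (by nlinarith [sq_nonneg (f y - a + (f y - b))])
  calc ENNReal.ofReal ((a - b) ^ 2) * ν Set.univ
      = ∫⁻ _, ENNReal.ofReal ((a - b) ^ 2) ∂ν := (lintegral_const _).symm
    _ ≤ ∫⁻ y, 2 * (ENNReal.ofReal ((f y - a) ^ 2) + ENNReal.ofReal ((f y - b) ^ 2)) ∂ν :=
        lintegral_mono hpoint
    _ = 2 * (∫⁻ y, ENNReal.ofReal ((f y - a) ^ 2) ∂ν +
          ∫⁻ y, ENNReal.ofReal ((f y - b) ^ 2) ∂ν) := by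
        rw [lintegral_const_mul' _ _ ENNReal.ofNat_ne_top, lintegral_add_left (by fun_prop)]
    _ ≤ _ := by gcongr

lemma ofReal_sq_sub_mul_klTerm_le (P Q : Measure ℝ) [IsProbabilityMeasure P]
    [IsProbabilityMeasure Q] {f : ℝ → ℝ} (hf : Measurable f) (a b : ℝ) :
    ENNReal.ofReal ((a - b) ^ 2 * klTerm P Q) ≤
      2 * (∫⁻ y, ENNReal.ofReal ((f y - a) ^ 2) ∂P + ∫⁻ y, ENNReal.ofReal ((f y - b) ^ 2) ∂Q) := by
  rw [ENNReal.ofReal_mul (sq_nonneg _)]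
  calc ENNReal.ofReal ((a - b) ^ 2) * ENNReal.ofReal (klTerm P Q)
      ≤ ENNReal.ofReal ((a - b) ^ 2) * overlap P Q Set.univ := by
        gcongr
        exact ofReal_klTerm_le_overlap_univ P Q
    _ ≤ _ := two_point_lower_bound (overlap_le_left P Q) (overlap_le_right P Q) hf a b

theorem expected_risk_coupling_lower_bound_general
    {Ω : Type} [MeasurableSpace Ω] (μ : Measure Ω)
    (θ₁ θ₂ : Ω → ℝ) (hθ₁ : Measurable θ₁) (hθ₂ : Measurable θ₂)
    (hident : Measure.map θ₁ μ = Measure.map θ₂ μ)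
    (κ : ProbabilityTheory.Kernel ℝ ℝ) [IsMarkovKernel κ]
    (est : ℝ → ℝ) (hest : Measurable est) :
    ENNReal.ofReal (4 : ℝ)⁻¹ *
        ∫⁻ ω, ENNReal.ofReal ((θ₁ ω - θ₂ ω) ^ 2 * klTerm (κ (θ₁ ω)) (κ (θ₂ ω))) ∂μ ≤
      ∫⁻ ω, ∫⁻ y, ENNReal.ofReal ((est y - θ₁ ω) ^ 2) ∂(κ (θ₁ ω)) ∂μ := by
  set R : ℝ → ℝ≥0∞ := fun t => ∫⁻ y, ENNReal.ofReal ((est y - t) ^ 2) ∂(κ t)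
  have hR : Measurable R := Measurable.lintegral_kernel_prod_right'
    (f := fun p : ℝ × ℝ => ENNReal.ofReal ((est p.2 - p.1) ^ 2)) (by fun_prop)
  have hswap : ∫⁻ ω, R (θ₂ ω) ∂μ = ∫⁻ ω, R (θ₁ ω) ∂μ := by
    rw [← lintegral_map hR hθ₁, ← lintegral_map hR hθ₂, hident]
  calc ENNReal.ofReal (4 : ℝ)⁻¹ *
        ∫⁻ ω, ENNReal.ofReal ((θ₁ ω - θ₂ ω) ^ 2 * klTerm (κ (θ₁ ω)) (κ (θ₂ ω))) ∂μ
      ≤ ENNReal.ofReal (4 : ℝ)⁻¹ * ∫⁻ ω, 2 * (R (θ₁ ω) + R (θ₂ ω)) ∂μ := by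
        gcongr with ω
        exact ofReal_sq_sub_mul_klTerm_le _ _ hest _ _
    _ = ENNReal.ofReal (4 : ℝ)⁻¹ * (4 * ∫⁻ ω, R (θ₁ ω) ∂μ) := by
        rw [lintegral_const_mul' _ _ ENNReal.ofNat_ne_top,
          lintegral_add_left (f := fun ω => R (θ₁ ω)) (hR.comp hθ₁), hswap]
        ring
    _ = ∫⁻ ω, R (θ₁ ω) ∂μ := by
        rw [← mul_assoc, ENNReal.ofReal_inv_of_pos four_pos, ENNReal.ofReal_ofNat,
          ENNReal.inv_mul_cancel (by norm_num) (by norm_num), one_mul]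

/-- **Lemma (Lower bounding the expected risk by a coupling).** Let `θ₁, θ₂` be identically
distributed continuous real random variables, and let the observation `y` given `θ = t`
be drawn from `κ t`, a Markov kernel whose values have Lebesgue densities (this encodes
`y = g(θ, ε)` with `Law(y | θ)` having a density). Then for any estimator `θ̂` and any
coupling `(θ₁, θ₂)` (i.e. any pair of identically-distributed random variables on a common
probability space),
`E_{θ,y}[(θ̂(y) - θ)²] ≥ (1/4)·E[(θ₁ - θ₂)²·max(0, 1 - √(2 KL(Law(y|θ₁) ‖ Law(y|θ₂))))]`,
where the factor is interpreted as `0` when the KL divergence is infinite. -/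
theorem expected_risk_coupling_lower_bound
    {Ω : Type} [MeasurableSpace Ω] (μ : Measure Ω) [IsProbabilityMeasure μ]
    (θ₁ θ₂ : Ω → ℝ) (hθ₁ : Measurable θ₁) (hθ₂ : Measurable θ₂)
    (hident : Measure.map θ₁ μ = Measure.map θ₂ μ)
    (hcont : Measure.map θ₁ μ ≪ MeasureTheory.volume)
    (κ : ProbabilityTheory.Kernel ℝ ℝ) [IsMarkovKernel κ]
    (hdensity : ∀ t : ℝ, κ t ≪ MeasureTheory.volume)
    (est : ℝ → ℝ) (hest : Measurable est) :
    ENNReal.ofReal (4 : ℝ)⁻¹ *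
        ∫⁻ ω, ENNReal.ofReal ((θ₁ ω - θ₂ ω) ^ 2 * klTerm (κ (θ₁ ω)) (κ (θ₂ ω))) ∂μ ≤
      ∫⁻ ω, ∫⁻ y, ENNReal.ofReal ((est y - θ₁ ω) ^ 2) ∂(κ (θ₁ ω)) ∂μ :=
  expected_risk_coupling_lower_bound_general μ θ₁ θ₂ hθ₁ hθ₂ hident κ est hest

end
end
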